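/- arXiv:1701.01307 — 2 statements merged into one kernel-verified Lean document; each statement's English description precedes it below -/
import Mathlib

section
/- T_ε is a connected subset of ℝ² if and only if |ε| ≤ (|p| − 1)² / (|p| − 2). -/
noncomputable section

/-- The digit set `D_ε = {(i + δ_{ij} ε, j + δ_{ij} ε) : i, j ∈ {0, …, |p|-1}}`. -/
def Ddiag (p : ℤ) (ε : ℝ) : Set (ℝ × ℝ) :=
  {d | ∃ i j : ℤ, 0 ≤ i ∧ i ≤ |p| - 1 ∧ 0 ≤ j ∧ j ≤ |p| - 1 ∧
      d = ((i : ℝ) + (if i = j then ε else 0), (j : ℝ) + (if i = j then ε else 0))}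

/-- The self-similar set `T_ε = {∑_{k=1}^∞ p^{-k} d_k : d_k ∈ D_ε}`. -/
def Tdiag (p : ℤ) (ε : ℝ) : Set (ℝ × ℝ) :=
  {z | ∃ d : ℕ → ℝ × ℝ, (∀ k, d k ∈ Ddiag p ε) ∧
      z = ∑' k : ℕ, ((p : ℝ) ^ (k + 1))⁻¹ • d k}

/-!
`T_ε` is the attractor of the contractions `x ↦ p⁻¹ (d + x)`, `d ∈ D_ε`. By Hata's criterion it is
connected iff the graph on `D_ε` joining `d, d'` whenever `d - d' ∈ T_ε - T_ε` is connected (for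
the "if" part, `T_ε` is the decreasing intersection of the connected compact sets obtained by
iterating the Hutchinson operator on a large ball).

With `N = |p|`, the constant digit differences `(N - 1) v` show that `v ∈ T_ε - T_ε` for
`v = (1, 1), (1, 0), (0, 1), (-1, 1)`, so the diagonal digits are all connected, the off-diagonal
digits are all connected, and everything hinges on an edge between the two classes.
Every point of `T_ε - T_ε` is `(a + sε, e + sε)` with `|a|, |e| ≤ 1` and `|s| ≤ 1 / (N - 1)`;
matched against `(i + ε - k, i + ε - l)` with `k ≠ l`, this forces
`|ε| (N - 2) / (N - 1) ≤ N - 1`. Conversely, if this holds, write `ε (N - 2) / (N - 1) = m + x`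
with `m` an integer and `x ∈ [0, 1]`, and expand `x` in base `N`: the digit differences
`(xₙ + ε, xₙ + ε - (N - 1))` then sum to `(ε - m, ε - m - 1)`, such an edge.
-/

open Set Relation Metric
open scoped NNReal Pointwise

theorem IsPreconnected.iInter_of_directed {X ι : Type*} [TopologicalSpace X] [T2Space X]
    [Nonempty ι] {K : ι → Set X} (hdir : Directed (· ⊇ ·) K) (hK : ∀ i, IsCompact (K i))
    (hKc : ∀ i, IsPreconnected (K i)) : IsPreconnected (⋂ i, K i) := by
  have hC : IsClosed (⋂ i, K i) := isClosed_iInter fun i => (hK i).isClosed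
  rw [isPreconnected_iff_subset_of_fully_disjoint_closed hC]
  intro u v hu hv huv hdisj
  have hCK : IsCompact (⋂ i, K i) := (hK (Classical.arbitrary ι)).of_isClosed_subset hC
    (iInter_subset _ _)
  obtain ⟨U, V, hU, hV, huU, hvV, hUV⟩ := SeparatedNhds.of_isCompact_isCompact
    (hCK.inter_right hu) (hCK.inter_right hv) (hdisj.mono inter_subset_right inter_subset_right)
  obtain ⟨i, hi⟩ := exists_subset_nhds_of_isCompact hdir hK fun x hx =>
    (hU.union hV).mem_nhds <| (huv hx).imp (fun h => huU ⟨hx, h⟩) (fun h => hvV ⟨hx, h⟩)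
  have hCi : ⋂ j, K j ⊆ K i := iInter_subset _ i
  rcases (hKc i).subset_or_subset hU hV hUV hi with hKU | hKV
  · refine Or.inl fun x hx => (huv hx).resolve_right fun hxv => ?_
    exact hUV.notMem_of_mem_left (hKU (hCi hx)) (hvV ⟨hx, hxv⟩)
  · refine Or.inr fun x hx => (huv hx).resolve_left fun hxu => ?_
    exact hUV.notMem_of_mem_left (huU ⟨hx, hxu⟩) (hKV (hCi hx))

theorem IsConnected.iInter_of_directed {X ι : Type*} [TopologicalSpace X] [T2Space X]
    [Nonempty ι] {K : ι → Set X} (hdir : Directed (· ⊇ ·) K) (hK : ∀ i, IsCompact (K i))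
    (hKc : ∀ i, IsConnected (K i)) : IsConnected (⋂ i, K i) :=
  ⟨IsCompact.nonempty_iInter_of_directed_nonempty_isCompact_isClosed K hdir
      (fun i => (hKc i).nonempty) hK (fun i => (hK i).isClosed),
    IsPreconnected.iInter_of_directed hdir hK fun i => (hKc i).isPreconnected⟩

theorem IsPreconnected.reflTransGen_of_biUnion_isClosed {X ι : Type*} [TopologicalSpace X]
    {t : Set ι} {s : ι → Set X} (ht : t.Finite) (hs : ∀ i ∈ t, IsClosed (s i))
    (hconn : IsPreconnected (⋃ i ∈ t, s i)) {i j : ι} (hi : i ∈ t) (hj : j ∈ t)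
    (hsi : (s i).Nonempty) (hsj : (s j).Nonempty) :
    ReflTransGen (fun k l => k ∈ t ∧ l ∈ t ∧ (s k ∩ s l).Nonempty) i j := by
  set R := fun k l => k ∈ t ∧ l ∈ t ∧ (s k ∩ s l).Nonempty
  set S := {k | ReflTransGen R i k}
  by_contra hjS
  have hclosed : ∀ P : Set ι, IsClosed (⋃ k ∈ t ∩ P, s k) := fun P =>
    (ht.subset inter_subset_left).isClosed_biUnion fun k hk => hs k hk.1
  have hcover : ⋃ k ∈ t, s k ⊆ (⋃ k ∈ t ∩ S, s k) ∪ ⋃ k ∈ t ∩ Sᶜ, s k := by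
    intro x hx
    obtain ⟨k, hk, hxk⟩ := mem_iUnion₂.mp hx
    by_cases hkS : k ∈ S
    · exact Or.inl (mem_biUnion ⟨hk, hkS⟩ hxk)
    · exact Or.inr (mem_biUnion ⟨hk, hkS⟩ hxk)
  obtain ⟨x, -, hxS, hxSc⟩ := isPreconnected_closed_iff.mp hconn _ _ (hclosed S) (hclosed Sᶜ)
    hcover (hsi.mono fun y hy => ⟨mem_biUnion hi hy, mem_biUnion ⟨hi, ReflTransGen.refl⟩ hy⟩)
    (hsj.mono fun y hy => ⟨mem_biUnion hj hy, mem_biUnion ⟨hj, hjS⟩ hy⟩)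
  obtain ⟨k, ⟨hk, hkS⟩, hxk⟩ := mem_iUnion₂.mp hxS
  obtain ⟨l, ⟨hl, hlS⟩, hxl⟩ := mem_iUnion₂.mp hxSc
  exact hlS (ReflTransGen.tail hkS ⟨hk, hl, x, hxk, hxl⟩)

lemma Relation.ReflTransGen.exists_mem_notMem {α : Type*} {r : α → α → Prop} {s : Set α}
    {a b : α} (h : ReflTransGen r a b) (ha : a ∈ s) (hb : b ∉ s) : ∃ x ∈ s, ∃ y ∉ s, r x y := by
  induction h with
  | refl => exact absurd ha hb
  | @tail c d _ hcd ih =>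
    by_cases hc : c ∈ s
    · exact ⟨c, hc, d, hb, hcd⟩
    · exact ih hc

lemma reflTransGen_of_steps {α : Type*} {r : α → α → Prop} (g : ℤ → α) {m n : ℤ} (hmn : m ≤ n)
    (h : ∀ i, m ≤ i → i < n → r (g (i + 1)) (g i)) : ReflTransGen r (g n) (g m) := by
  induction n, hmn using Int.leInduction with
  | base => exact ReflTransGen.refl
  | succ n hmn ih =>
    exact ReflTransGen.head (h n hmn (lt_add_one n)) (ih fun i hi hin => h i hi (by omega))

section Hutchinson

variable {X ι : Type*} (t : Set ι) (f : ι → X → X)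

def hutchinson (S : Set X) : Set X := ⋃ i ∈ t, f i '' S

variable {t f}

lemma hutchinson_mono : Monotone (hutchinson t f) :=
  fun _ _ h => biUnion_mono subset_rfl fun _ _ => image_mono h

section Topology

variable [TopologicalSpace X]

lemma isCompact_hutchinson (ht : t.Finite) (hf : ∀ i ∈ t, Continuous (f i)) {S : Set X}
    (hS : IsCompact S) : IsCompact (hutchinson t f S) :=
  ht.isCompact_biUnion fun i hi => hS.image (hf i hi)

lemma isConnected_hutchinson (htne : t.Nonempty) (hf : ∀ i ∈ t, Continuous (f i)) {S T : Set X}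
    (hS : IsConnected S) (hTS : T ⊆ S)
    (hgraph : ∀ i ∈ t, ∀ j ∈ t,
      ReflTransGen (fun i j => i ∈ t ∧ j ∈ t ∧ (f i '' T ∩ f j '' T).Nonempty) i j) :
    IsConnected (hutchinson t f S) :=
  IsConnected.biUnion_of_reflTransGen htne (fun i hi => hS.image _ (hf i hi).continuousOn)
    fun i hi j hj => ReflTransGen.mono (fun _ _ hkl =>
      ⟨hkl.2.2.mono (inter_subset_inter (image_mono hTS) (image_mono hTS)), hkl.1⟩)
      _ _ (hgraph i hi j hj)

end Topology

variable [PseudoMetricSpace X] {r : ℝ≥0} {T : Set X}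

lemma exists_dist_le_of_mem_hutchinson (hf : ∀ i ∈ t, LipschitzWith r (f i))
    (hT : hutchinson t f T ⊆ T) {S : Set X} {δ : ℝ} (hS : ∀ x ∈ S, ∃ y ∈ T, dist x y ≤ δ) :
    ∀ x ∈ hutchinson t f S, ∃ y ∈ T, dist x y ≤ r * δ := by
  intro x hx
  obtain ⟨i, hi, x, hxS, rfl⟩ : ∃ i ∈ t, ∃ x' ∈ S, f i x' = x := by
    simpa [hutchinson] using hx
  obtain ⟨y, hyT, hxy⟩ := hS x hxS
  exact ⟨f i y, hT (mem_biUnion hi (mem_image_of_mem _ hyT)),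
    ((hf i hi).dist_le_mul x y).trans (by gcongr)⟩

lemma hutchinson_closedBall_subset (hr : r < 1) (hf : ∀ i ∈ t, LipschitzWith r (f i))
    (hT : hutchinson t f T ⊆ T) (hTb : Bornology.IsBounded T) {c : X} (hc : c ∈ T) :
    hutchinson t f (closedBall c (diam T / (1 - r))) ⊆ closedBall c (diam T / (1 - r)) := by
  have hr' : (0 : ℝ) < 1 - r := sub_pos.mpr (by exact_mod_cast hr)
  have hR : diam T / (1 - r) = r * (diam T / (1 - r)) + diam T := by
    field_simp; ring
  intro x hx
  obtain ⟨i, hi, x, hxB, rfl⟩ : ∃ i ∈ t, ∃ x' ∈ closedBall c (diam T / (1 - r)), f i x' = x := by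
    simpa [hutchinson] using hx
  rw [mem_closedBall] at hxB ⊢
  calc dist (f i x) c ≤ dist (f i x) (f i c) + dist (f i c) c := dist_triangle _ _ _
    _ ≤ r * (diam T / (1 - r)) + diam T := by
      gcongr
      · exact ((hf i hi).dist_le_mul x c).trans (by gcongr)
      · exact dist_le_diam_of_mem hTb (hT (mem_biUnion hi (mem_image_of_mem _ hc))) hc
    _ = diam T / (1 - r) := hR.symm

lemma iInter_hutchinson_iterate_eq (hr : r < 1) (hf : ∀ i ∈ t, LipschitzWith r (f i))
    (hTc : IsClosed T) (hself : hutchinson t f T = T) {K : Set X} (hTK : T ⊆ K) {R : ℝ}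
    (hK : ∀ x ∈ K, ∃ y ∈ T, dist x y ≤ R) :
    ⋂ n, (hutchinson t f)^[n] K = T := by
  refine Subset.antisymm (fun x hx => ?_) (subset_iInter fun n => ?_)
  · have hnear : ∀ n, ∀ x ∈ (hutchinson t f)^[n] K, ∃ y ∈ T, dist x y ≤ r ^ n * R := by
      intro n
      induction n with
      | zero => simpa using hK
      | succ n ih =>
        rw [Function.iterate_succ_apply']
        simpa [pow_succ', mul_assoc] using
          exists_dist_le_of_mem_hutchinson hf hself.subset ih
    rw [← hTc.closure_eq, Metric.mem_closure_iff]
    intro δ hδ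
    have hlim : Filter.Tendsto (fun n => (r : ℝ) ^ n * R) Filter.atTop (nhds 0) := by
      simpa using (tendsto_pow_atTop_nhds_zero_of_lt_one r.2 hr).mul_const R
    obtain ⟨n, hn⟩ := (hlim.eventually (gt_mem_nhds hδ)).exists
    obtain ⟨y, hyT, hxy⟩ := hnear n x (mem_iInter.mp hx n)
    exact ⟨y, hyT, hxy.trans_lt hn⟩
  · calc T = (hutchinson t f)^[n] T := (Function.iterate_fixed hself n).symm
      _ ⊆ (hutchinson t f)^[n] K := hutchinson_mono.iterate n hTK

end Hutchinson

/-- Hata's connectedness criterion for the attractor of finitely many contractions. -/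
theorem isConnected_iff_reflTransGen_of_hutchinson_eq {E ι : Type*} [NormedAddCommGroup E]
    [NormedSpace ℝ E] [ProperSpace E] {t : Set ι} {f : ι → E → E} {r : ℝ≥0} {T : Set E}
    (ht : t.Finite) (hr : r < 1) (hf : ∀ i ∈ t, LipschitzWith r (f i)) (hT : IsCompact T)
    (hTne : T.Nonempty) (hself : hutchinson t f T = T) :
    IsConnected T ↔ ∀ i ∈ t, ∀ j ∈ t,
      ReflTransGen (fun i j => i ∈ t ∧ j ∈ t ∧ (f i '' T ∩ f j '' T).Nonempty) i j := by
  have hcont : ∀ i ∈ t, Continuous (f i) := fun i hi => (hf i hi).continuous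
  refine ⟨fun hconn i hi j hj => ?_, fun hgraph => ?_⟩
  · refine IsPreconnected.reflTransGen_of_biUnion_isClosed ht
      (fun i hi => (hT.image (hcont i hi)).isClosed) ?_ hi hj (hTne.image _) (hTne.image _)
    rw [← hutchinson, hself]
    exact hconn.isPreconnected
  obtain ⟨c, hc⟩ := hTne
  obtain ⟨i, hi, -⟩ := mem_iUnion₂.mp (hself.symm ▸ hc : c ∈ hutchinson t f T)
  set R := diam T / (1 - r)
  set K := fun n => (hutchinson t f)^[n] (closedBall c R)
  have hTK : T ⊆ closedBall c R := fun x hx => mem_closedBall.mpr <|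
    (dist_le_diam_of_mem hT.isBounded hx hc).trans <|
      le_div_self diam_nonneg (sub_pos.mpr (by exact_mod_cast hr)) (by simp)
  have hinv := hutchinson_closedBall_subset hr hf hself.subset hT.isBounded hc
  have hanti : Antitone K := antitone_nat_of_succ_le fun n => by
    simp only [K, Function.iterate_succ_apply]
    exact hutchinson_mono.iterate n hinv
  have hKeq : ⋂ n, K n = T :=
    iInter_hutchinson_iterate_eq hr hf hT.isClosed hself hTK fun x hx => ⟨c, hc, hx⟩
  have hKT : ∀ n, T ⊆ K n := fun n => hKeq.symm.subset.trans (iInter_subset K n)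
  have hK : ∀ n, IsCompact (K n) ∧ IsConnected (K n) := by
    intro n
    induction n with
    | zero => exact ⟨isCompact_closedBall c R,
        (convex_closedBall c R).isConnected (nonempty_closedBall.mpr (div_nonneg diam_nonneg
          (sub_nonneg.mpr (by exact_mod_cast hr.le))))⟩
    | succ n ih =>
      simp only [K, Function.iterate_succ_apply']
      exact ⟨isCompact_hutchinson ht hcont ih.1,
        isConnected_hutchinson ⟨i, hi⟩ hcont ih.2 (hKT n) hgraph⟩
  rw [← hKeq]
  exact IsConnected.iInter_of_directed hanti.directed_ge (fun n => (hK n).1) fun n => (hK n).2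

section SelfSimilarSet

variable {E : Type*} [NormedAddCommGroup E] [NormedSpace ℝ E]

def selfSimilarSet (b : ℝ) (D : Set E) : Set E :=
  {z | ∃ d : ℕ → E, (∀ k, d k ∈ D) ∧ z = ∑' k, (b ^ (k + 1))⁻¹ • d k}

lemma hasSum_inv_pow_succ {c : ℝ} (hc : 1 < c) :
    HasSum (fun k : ℕ => (c ^ (k + 1))⁻¹) (c - 1)⁻¹ := by
  have hc0 : 0 < c := one_pos.trans hc
  have h := (hasSum_geometric_of_lt_one (inv_nonneg.mpr hc0.le)
    (inv_lt_one_of_one_lt₀ hc)).mul_left c⁻¹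
  have hterm : (fun k : ℕ => (c ^ (k + 1))⁻¹) = fun k => c⁻¹ * c⁻¹ ^ k := by
    funext k; rw [pow_succ', mul_inv, inv_pow]
  have hsum : (c - 1)⁻¹ = c⁻¹ * (1 - c⁻¹)⁻¹ := by
    rw [← mul_inv, mul_sub, mul_one, mul_inv_cancel₀ hc0.ne']
  rwa [hterm, hsum]

variable {b : ℝ}

lemma selfSimilarSet_nonempty {D : Set E} (hD : D.Nonempty) : (selfSimilarSet b D).Nonempty :=
  let ⟨d, hd⟩ := hD
  ⟨_, fun _ => d, fun _ => hd, rfl⟩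

lemma image_inter_nonempty_iff (hb : b ≠ 0) (T : Set E) (d d' : E) :
    ((fun x => b⁻¹ • (d + x)) '' T ∩ (fun x => b⁻¹ • (d' + x)) '' T).Nonempty ↔
      d - d' ∈ T - T := by
  rw [Set.mem_sub]
  constructor
  · rintro ⟨_, ⟨x, hx, rfl⟩, y, hy, hxy⟩
    have hxy' : d' + y = d + x := smul_right_injective E (inv_ne_zero hb) hxy
    exact ⟨y, hy, x, hx, by rw [sub_eq_sub_iff_add_eq_add, add_comm, hxy']⟩
  · rintro ⟨y, hy, x, hx, hyx⟩
    refine ⟨_, ⟨x, hx, rfl⟩, y, hy, ?_⟩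
    rw [sub_eq_sub_iff_add_eq_add, add_comm] at hyx
    simp only [hyx]

lemma norm_inv_pow_succ_smul (x : E) (k : ℕ) :
    ‖(b ^ (k + 1))⁻¹ • x‖ = (|b| ^ (k + 1))⁻¹ * ‖x‖ := by
  rw [norm_smul, norm_inv, norm_pow, Real.norm_eq_abs]

lemma summable_inv_pow_succ_smul [CompleteSpace E] (hb : 1 < |b|) {x : ℕ → E} {C : ℝ}
    (hx : ∀ k, ‖x k‖ ≤ C) : Summable fun k => (b ^ (k + 1))⁻¹ • x k :=
  Summable.of_norm_bounded ((hasSum_inv_pow_succ hb).summable.mul_right C) fun k => by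
    rw [norm_inv_pow_succ_smul]; gcongr; exact hx k

lemma norm_tsum_inv_pow_succ_smul_le (hb : 1 < |b|) {x : ℕ → E} {C : ℝ}
    (hx : ∀ k, ‖x k‖ ≤ C) : ‖∑' k, (b ^ (k + 1))⁻¹ • x k‖ ≤ C / (|b| - 1) := by
  have hbound : ∀ k, ‖(b ^ (k + 1))⁻¹ • x k‖ ≤ (|b| ^ (k + 1))⁻¹ * C := fun k => by
    rw [norm_inv_pow_succ_smul]; gcongr; exact hx k
  rw [div_eq_inv_mul]
  exact tsum_of_norm_bounded ((hasSum_inv_pow_succ hb).mul_right C) hbound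

lemma tsum_inv_pow_succ_smul_eq {x : ℕ → E}
    (hx : Summable fun k => (b ^ (k + 1))⁻¹ • x k) :
    ∑' k, (b ^ (k + 1))⁻¹ • x k = b⁻¹ • (x 0 + ∑' k, (b ^ (k + 1))⁻¹ • x (k + 1)) := by
  rw [hx.tsum_eq_zero_add, smul_add, ← tsum_const_smul'']
  simp only [smul_smul, ← mul_inv, ← pow_succ']
  simp

variable [CompleteSpace E] {D : Set E}

lemma summable_inv_pow_succ_smul_of_mem (hb : 1 < |b|) (hD : Bornology.IsBounded D)
    {d : ℕ → E} (hd : ∀ k, d k ∈ D) : Summable fun k => (b ^ (k + 1))⁻¹ • d k :=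
  let ⟨_, hC⟩ := hD.exists_norm_le
  summable_inv_pow_succ_smul hb fun k => hC _ (hd k)

lemma hutchinson_selfSimilarSet (hb : 1 < |b|) (hD : Bornology.IsBounded D) :
    hutchinson D (fun d x => b⁻¹ • (d + x)) (selfSimilarSet b D) = selfSimilarSet b D := by
  ext z
  simp only [hutchinson, mem_iUnion₂, mem_image, exists_prop]
  constructor
  · rintro ⟨d₀, hd₀, _, ⟨a, ha, rfl⟩, rfl⟩
    let d : ℕ → E := fun | 0 => d₀ | k + 1 => a k
    have hd : ∀ k, d k ∈ D := by rintro (_ | k); exacts [hd₀, ha k]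
    exact ⟨d, hd, (tsum_inv_pow_succ_smul_eq (summable_inv_pow_succ_smul_of_mem hb hD hd)).symm⟩
  · rintro ⟨d, hd, rfl⟩
    exact ⟨d 0, hd 0, _, ⟨fun k => d (k + 1), fun k => hd _, rfl⟩,
      (tsum_inv_pow_succ_smul_eq (summable_inv_pow_succ_smul_of_mem hb hD hd)).symm⟩

lemma isCompact_selfSimilarSet (hb : 1 < |b|) (hD : IsCompact D) :
    IsCompact (selfSimilarSet b D) := by
  have : CompactSpace D := isCompact_iff_compactSpace.mp hD
  obtain ⟨C, hC⟩ := hD.isBounded.exists_norm_le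
  have hrange :
      selfSimilarSet b D = range fun σ : ℕ → D => ∑' k, (b ^ (k + 1))⁻¹ • (σ k : E) := by
    ext z
    constructor
    · rintro ⟨d, hd, rfl⟩
      exact ⟨fun k => ⟨d k, hd k⟩, rfl⟩
    · rintro ⟨σ, rfl⟩
      exact ⟨_, fun k => (σ k).2, rfl⟩
  rw [hrange]
  refine isCompact_range <| continuous_tsum
    (fun k => (continuous_subtype_val.comp (continuous_apply k)).const_smul _)
    ((hasSum_inv_pow_succ hb).summable.mul_right C) fun k σ => ?_
  rw [norm_inv_pow_succ_smul]
  gcongr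
  exact hC _ (σ k).2

lemma exists_tsum_eq_of_mem_sub_selfSimilarSet (hb : 1 < |b|) (hD : Bornology.IsBounded D)
    {z : E} (hz : z ∈ selfSimilarSet b D - selfSimilarSet b D) :
    ∃ c : ℕ → E, (∀ k, c k ∈ D - D) ∧ z = ∑' k, (b ^ (k + 1))⁻¹ • c k := by
  obtain ⟨_, ⟨d, hd, rfl⟩, _, ⟨d', hd', rfl⟩, rfl⟩ := Set.mem_sub.mp hz
  refine ⟨fun k => d k - d' k, fun k => sub_mem_sub (hd k) (hd' k), ?_⟩
  rw [← (summable_inv_pow_succ_smul_of_mem hb hD hd).tsum_sub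
    (summable_inv_pow_succ_smul_of_mem hb hD hd')]
  simp only [smul_sub]

lemma mem_sub_selfSimilarSet_of_hasSum (hb : 1 < |b|) (hD : Bornology.IsBounded D)
    {c : ℕ → E} (hc : ∀ k, c k ∈ D - D) {z : E}
    (hz : HasSum (fun k => (|b| ^ (k + 1))⁻¹ • c k) z) :
    z ∈ selfSimilarSet b D - selfSimilarSet b D := by
  -- `|b|⁻ᵏ = ± b⁻ᵏ`, and a minus sign is absorbed by swapping the two digits.
  have hsign : ∀ k, ∃ d ∈ D, ∃ d' ∈ D, (|b| ^ (k + 1))⁻¹ • c k = (b ^ (k + 1))⁻¹ • (d - d') := by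
    intro k
    obtain ⟨d, hd, d', hd', hc'⟩ := Set.mem_sub.mp (hc k)
    rw [← abs_pow]
    rcases abs_choice (b ^ (k + 1)) with h | h <;> rw [h]
    · exact ⟨d, hd, d', hd', by rw [hc']⟩
    · exact ⟨d', hd', d, hd, by rw [← hc', inv_neg, neg_smul, ← smul_neg, neg_sub]⟩
  choose d hd d' hd' hdd' using hsign
  refine Set.mem_sub.mpr ⟨_, ⟨d, hd, rfl⟩, _, ⟨d', hd', rfl⟩, ?_⟩
  rw [← (summable_inv_pow_succ_smul_of_mem hb hD hd).tsum_sub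
    (summable_inv_pow_succ_smul_of_mem hb hD hd'), ← hz.tsum_eq]
  simp only [hdd', smul_sub]

lemma inv_smul_mem_sub_selfSimilarSet (hb : 1 < |b|) (hD : Bornology.IsBounded D) {c : E}
    (hc : c ∈ D - D) : (|b| - 1)⁻¹ • c ∈ selfSimilarSet b D - selfSimilarSet b D :=
  mem_sub_selfSimilarSet_of_hasSum hb hD (fun _ => hc) ((hasSum_inv_pow_succ hb).smul_const c)

end SelfSimilarSet

theorem isConnected_selfSimilarSet_iff {E : Type*} [NormedAddCommGroup E] [NormedSpace ℝ E]
    [ProperSpace E] {b : ℝ} {D : Set E} (hb : 1 < |b|) (hD : D.Finite) (hDne : D.Nonempty) :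
    IsConnected (selfSimilarSet b D) ↔ ∀ d ∈ D, ∀ d' ∈ D, ReflTransGen
      (fun d d' => d ∈ D ∧ d' ∈ D ∧ d - d' ∈ selfSimilarSet b D - selfSimilarSet b D) d d' := by
  have hb0 : b ≠ 0 := by rintro rfl; norm_num at hb
  have hlip : ∀ d ∈ D, LipschitzWith ‖b⁻¹‖₊ fun x => b⁻¹ • (d + x) := fun d _ =>
    LipschitzWith.of_dist_le_mul fun x y => by rw [dist_smul₀, dist_add_left, coe_nnnorm]
  have hr : ‖b⁻¹‖₊ < 1 := by
    rw [← NNReal.coe_lt_coe, coe_nnnorm, norm_inv, Real.norm_eq_abs]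
    exact inv_lt_one_of_one_lt₀ hb
  rw [isConnected_iff_reflTransGen_of_hutchinson_eq hD hr hlip
    (isCompact_selfSimilarSet hb hD.isCompact) (selfSimilarSet_nonempty hDne)
    (hutchinson_selfSimilarSet hb hD.isBounded)]
  simp only [image_inter_nonempty_iff hb0]

lemma exists_int_sub_mem_Icc {c : ℝ} {n : ℤ} (hn : 1 ≤ n) (hc : |c| ≤ n) :
    ∃ m : ℤ, -n ≤ m ∧ m ≤ n - 1 ∧ c - m ∈ Icc (0 : ℝ) 1 := by
  refine ⟨min ⌊c⌋ (n - 1), le_min (Int.le_floor.mpr ?_) (by omega), min_le_right _ _, ?_, ?_⟩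
  · push_cast; linarith [neg_abs_le c]
  · linarith [(Int.cast_le (R := ℝ)).mpr (min_le_left ⌊c⌋ (n - 1)), Int.floor_le c]
  · have : c - 1 ≤ ((min ⌊c⌋ (n - 1) : ℤ) : ℝ) := by
      rw [Int.cast_min]
      refine le_min (by linarith [Int.lt_floor_add_one c]) ?_
      push_cast; linarith [le_abs_self c]
    linarith

lemma sub_one_lt_abs_mul_one_sub {N ε s : ℝ} (hN : 3 ≤ N) (hε : (N - 1) ^ 2 / (N - 2) < |ε|)
    (hs : |s| ≤ (N - 1)⁻¹) : N - 1 < |ε * (1 - s)| := by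
  have h1s : (N - 2) / (N - 1) ≤ |1 - s| := by
    have : s ≤ 1 / (N - 1) := (le_abs_self s).trans (by simpa using hs)
    calc (N - 2) / (N - 1) = 1 - 1 / (N - 1) := by field_simp [show N - 1 ≠ 0 by linarith]; ring
      _ ≤ 1 - s := by linarith
      _ ≤ |1 - s| := le_abs_self _
  rw [abs_mul]
  calc N - 1 = (N - 1) ^ 2 / (N - 2) * ((N - 2) / (N - 1)) := by
        field_simp [show N - 2 ≠ 0 by linarith, show N - 1 ≠ 0 by linarith]
    _ < |ε| * |1 - s| := mul_lt_mul hε h1s (div_pos (by linarith) (by linarith)) (abs_nonneg _)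

section Digits

def digit (ε : ℝ) (i j : ℤ) : ℝ × ℝ :=
  ((i : ℝ) + if i = j then ε else 0, (j : ℝ) + if i = j then ε else 0)

variable {p : ℤ} {ε : ℝ}

lemma digit_self (i : ℤ) : digit ε i i = ((i : ℝ) + ε, (i : ℝ) + ε) := by
  simp [digit]

lemma digit_of_ne {i j : ℤ} (h : i ≠ j) : digit ε i j = ((i : ℝ), (j : ℝ)) := by
  simp [digit, h]

lemma digit_mem_Ddiag {i j : ℤ} (hi : i ∈ Icc 0 (|p| - 1)) (hj : j ∈ Icc 0 (|p| - 1)) :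
    digit ε i j ∈ Ddiag p ε :=
  ⟨i, j, hi.1, hi.2, hj.1, hj.2, rfl⟩

lemma Ddiag_eq_image (p : ℤ) (ε : ℝ) :
    Ddiag p ε = (fun q : ℤ × ℤ => digit ε q.1 q.2) '' (Icc 0 (|p| - 1) ×ˢ Icc 0 (|p| - 1)) := by
  ext d
  constructor
  · rintro ⟨i, j, hi₀, hi, hj₀, hj, rfl⟩
    exact ⟨(i, j), ⟨⟨hi₀, hi⟩, hj₀, hj⟩, rfl⟩
  · rintro ⟨⟨i, j⟩, ⟨hi, hj⟩, rfl⟩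
    exact digit_mem_Ddiag hi hj

lemma Ddiag_finite (p : ℤ) (ε : ℝ) : (Ddiag p ε).Finite := by
  rw [Ddiag_eq_image]
  exact ((finite_Icc _ _).prod (finite_Icc _ _)).image _

lemma Tdiag_eq_selfSimilarSet (p : ℤ) (ε : ℝ) : Tdiag p ε = selfSimilarSet (p : ℝ) (Ddiag p ε) :=
  rfl

lemma one_lt_abs_cast (hp : 2 < |p|) : 1 < |(p : ℝ)| := by
  rw [← Int.cast_abs]; exact_mod_cast (by omega : 1 < |p|)

lemma mem_sub_Tdiag_of_sub_eq_smul (hp : 2 < |p|) {d d' v : ℝ × ℝ} (hd : d ∈ Ddiag p ε)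
    (hd' : d' ∈ Ddiag p ε) (h : d - d' = (|(p : ℝ)| - 1) • v) :
    v ∈ Tdiag p ε - Tdiag p ε := by
  have hmem := inv_smul_mem_sub_selfSimilarSet (one_lt_abs_cast hp) (Ddiag_finite p ε).isBounded
    (sub_mem_sub hd hd')
  rwa [h, smul_smul, inv_mul_cancel₀ (sub_pos.mpr (one_lt_abs_cast hp)).ne', one_smul] at hmem

lemma one_one_mem_sub_Tdiag (hp : 2 < |p|) : ((1 : ℝ), (1 : ℝ)) ∈ Tdiag p ε - Tdiag p ε := by
  refine mem_sub_Tdiag_of_sub_eq_smul hp (digit_mem_Ddiag (i := |p| - 1) (j := |p| - 1)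
    ⟨by omega, le_rfl⟩ ⟨by omega, le_rfl⟩) (digit_mem_Ddiag (i := 0) (j := 0)
    ⟨le_rfl, by omega⟩ ⟨le_rfl, by omega⟩) ?_
  rw [digit_self, digit_self]
  ext <;> simp

lemma one_zero_mem_sub_Tdiag (hp : 2 < |p|) : ((1 : ℝ), (0 : ℝ)) ∈ Tdiag p ε - Tdiag p ε := by
  refine mem_sub_Tdiag_of_sub_eq_smul hp (digit_mem_Ddiag (i := |p| - 1) (j := 1)
    ⟨by omega, le_rfl⟩ ⟨by omega, by omega⟩) (digit_mem_Ddiag (i := 0) (j := 1)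
    ⟨le_rfl, by omega⟩ ⟨by omega, by omega⟩) ?_
  rw [digit_of_ne (by omega), digit_of_ne (by omega)]
  ext <;> simp

lemma zero_one_mem_sub_Tdiag (hp : 2 < |p|) : ((0 : ℝ), (1 : ℝ)) ∈ Tdiag p ε - Tdiag p ε := by
  refine mem_sub_Tdiag_of_sub_eq_smul hp (digit_mem_Ddiag (i := 1) (j := |p| - 1)
    ⟨by omega, by omega⟩ ⟨by omega, le_rfl⟩) (digit_mem_Ddiag (i := 1) (j := 0)
    ⟨by omega, by omega⟩ ⟨le_rfl, by omega⟩) ?_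
  rw [digit_of_ne (by omega), digit_of_ne (by omega)]
  ext <;> simp

lemma neg_one_one_mem_sub_Tdiag (hp : 2 < |p|) :
    ((-1 : ℝ), (1 : ℝ)) ∈ Tdiag p ε - Tdiag p ε := by
  refine mem_sub_Tdiag_of_sub_eq_smul hp (digit_mem_Ddiag (i := 0) (j := |p| - 1)
    ⟨le_rfl, by omega⟩ ⟨by omega, le_rfl⟩) (digit_mem_Ddiag (i := |p| - 1) (j := 0)
    ⟨by omega, le_rfl⟩ ⟨le_rfl, by omega⟩) ?_
  rw [digit_of_ne (by omega), digit_of_ne (by omega)]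
  ext <;> simp

def DigitAdj (p : ℤ) (ε : ℝ) (d d' : ℝ × ℝ) : Prop :=
  d ∈ Ddiag p ε ∧ d' ∈ Ddiag p ε ∧ d - d' ∈ Tdiag p ε - Tdiag p ε

instance : Std.Symm (DigitAdj p ε) where
  symm _ _ h := ⟨h.2.1, h.1, by
    obtain ⟨x, hx, y, hy, hxy⟩ := Set.mem_sub.mp h.2.2
    exact Set.mem_sub.mpr ⟨y, hy, x, hx, by rw [← neg_sub, hxy, neg_sub]⟩⟩

lemma digitAdj_succ_self (hp : 2 < |p|) {i : ℤ} (hi : 0 ≤ i) (hi' : i + 1 ≤ |p| - 1) :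
    DigitAdj p ε (digit ε (i + 1) (i + 1)) (digit ε i i) :=
  ⟨digit_mem_Ddiag ⟨by omega, hi'⟩ ⟨by omega, hi'⟩, digit_mem_Ddiag ⟨hi, by omega⟩ ⟨hi, by omega⟩,
    by rw [digit_self, digit_self]; convert one_one_mem_sub_Tdiag hp using 1; ext <;> simp⟩

lemma digitAdj_succ_left (hp : 2 < |p|) {i j : ℤ} (hi : 0 ≤ i) (hi' : i + 1 ≤ |p| - 1)
    (hj : j ∈ Icc 0 (|p| - 1)) (h₁ : i + 1 ≠ j) (h₂ : i ≠ j) :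
    DigitAdj p ε (digit ε (i + 1) j) (digit ε i j) :=
  ⟨digit_mem_Ddiag ⟨by omega, hi'⟩ hj, digit_mem_Ddiag ⟨hi, by omega⟩ hj, by
    rw [digit_of_ne h₁, digit_of_ne h₂]
    convert one_zero_mem_sub_Tdiag hp using 1; ext <;> simp⟩

lemma digitAdj_succ_right (hp : 2 < |p|) {i j : ℤ} (hi : i ∈ Icc 0 (|p| - 1)) (hj : 0 ≤ j)
    (hj' : j + 1 ≤ |p| - 1) (h₁ : i ≠ j + 1) (h₂ : i ≠ j) :
    DigitAdj p ε (digit ε i (j + 1)) (digit ε i j) :=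
  ⟨digit_mem_Ddiag hi ⟨by omega, hj'⟩, digit_mem_Ddiag hi ⟨hj, by omega⟩, by
    rw [digit_of_ne h₁, digit_of_ne h₂]
    convert zero_one_mem_sub_Tdiag hp using 1; ext <;> simp⟩

lemma reflTransGen_digit_self (hp : 2 < |p|) {i : ℤ} (hi : i ∈ Icc 0 (|p| - 1)) :
    ReflTransGen (DigitAdj p ε) (digit ε i i) (digit ε 0 0) :=
  reflTransGen_of_steps (fun k => digit ε k k) hi.1 fun k hk hki =>
    digitAdj_succ_self hp hk (by linarith [hi.2])

lemma reflTransGen_digit_of_ne (hp : 2 < |p|) {i j : ℤ} (hi : i ∈ Icc 0 (|p| - 1))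
    (hj : j ∈ Icc 0 (|p| - 1)) (hij : i ≠ j) :
    ReflTransGen (DigitAdj p ε) (digit ε i j) (digit ε 1 0) := by
  obtain ⟨hi₀, hi₁⟩ := hi
  obtain ⟨hj₀, hj₁⟩ := hj
  rcases hij.lt_or_gt with hlt | hgt
  · have hcross : DigitAdj p ε (digit ε 0 1) (digit ε 1 0) :=
      ⟨digit_mem_Ddiag ⟨le_rfl, by omega⟩ ⟨by omega, by omega⟩,
        digit_mem_Ddiag ⟨by omega, by omega⟩ ⟨le_rfl, by omega⟩, by
        rw [digit_of_ne (by omega), digit_of_ne (by omega)]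
        convert neg_one_one_mem_sub_Tdiag hp using 1; ext <;> simp⟩
    refine (reflTransGen_of_steps (fun k => digit ε k j) hi₀ fun k hk hki => ?_).trans <|
      (reflTransGen_of_steps (fun k => digit ε 0 k) (by omega : (1 : ℤ) ≤ j)
        fun k hk hkj => ?_).trans (ReflTransGen.single hcross)
    · exact digitAdj_succ_left hp hk (by omega) ⟨hj₀, hj₁⟩ (by omega) (by omega)
    · exact digitAdj_succ_right hp ⟨le_rfl, by omega⟩ (by omega) (by omega) (by omega) (by omega)
  · refine (reflTransGen_of_steps (fun k => digit ε i k) hj₀ fun k hk hkj => ?_).trans <|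
      reflTransGen_of_steps (fun k => digit ε k 0) (by omega : (1 : ℤ) ≤ i) fun k hk hki => ?_
    · exact digitAdj_succ_right hp ⟨hi₀, hi₁⟩ hk (by omega) (by omega) (by omega)
    · exact digitAdj_succ_left hp (by omega) (by omega) ⟨le_rfl, by omega⟩ (by omega) (by omega)

def HasCrossEdge (p : ℤ) (ε : ℝ) : Prop :=
  ∃ i ∈ Icc 0 (|p| - 1), ∃ k ∈ Icc 0 (|p| - 1), ∃ l ∈ Icc 0 (|p| - 1),
    k ≠ l ∧ digit ε i i - digit ε k l ∈ Tdiag p ε - Tdiag p ε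

lemma reflTransGen_of_hasCrossEdge (hp : 2 < |p|) (h : HasCrossEdge p ε) :
    ∀ d ∈ Ddiag p ε, ∀ d' ∈ Ddiag p ε, ReflTransGen (DigitAdj p ε) d d' := by
  obtain ⟨a, ha, k, hk, l, hl, hkl, hedge⟩ := h
  have hto : ∀ d ∈ Ddiag p ε, ReflTransGen (DigitAdj p ε) d (digit ε 1 0) := by
    rintro _ ⟨i, j, hi₀, hi, hj₀, hj, rfl⟩
    by_cases hij : i = j
    · subst hij
      exact (reflTransGen_digit_self hp ⟨hi₀, hi⟩).trans <|
        (Std.Symm.symm _ _ (reflTransGen_digit_self hp ha)).trans <|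
          ReflTransGen.head ⟨digit_mem_Ddiag ha ha, digit_mem_Ddiag hk hl, hedge⟩
            (reflTransGen_digit_of_ne hp hk hl hkl)
    · exact reflTransGen_digit_of_ne hp ⟨hi₀, hi⟩ ⟨hj₀, hj⟩ hij
  exact fun d hd d' hd' => (hto d hd).trans (Std.Symm.symm _ _ (hto d' hd'))

lemma hasCrossEdge_of_reflTransGen (hp : 2 < |p|)
    (h : ∀ d ∈ Ddiag p ε, ∀ d' ∈ Ddiag p ε, ReflTransGen (DigitAdj p ε) d d') :
    HasCrossEdge p ε := by
  have h0 : (0 : ℤ) ∈ Icc 0 (|p| - 1) := ⟨le_rfl, by omega⟩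
  have h1 : (1 : ℤ) ∈ Icc 0 (|p| - 1) := ⟨zero_le_one, by omega⟩
  obtain ⟨x, hx, y, hy, hxD, hyD, hxy⟩ :=
    (h _ (digit_mem_Ddiag h0 h0) _ (digit_mem_Ddiag h1 h0)).exists_mem_notMem
      (s := {d | d.1 = d.2}) (by simp [digit_self]) (by simp [digit_of_ne one_ne_zero])
  obtain ⟨i, j, hi₀, hi, hj₀, hj, rfl⟩ := hxD
  obtain ⟨k, l, hk₀, hk, hl₀, hl, rfl⟩ := hyD
  obtain rfl : i = j := by
    by_contra hij
    simp [hij] at hx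
  have hkl : k ≠ l := by
    rintro rfl
    simp at hy
  exact ⟨i, ⟨hi₀, hi⟩, k, ⟨hk₀, hk⟩, l, ⟨hl₀, hl⟩, hkl, hxy⟩

lemma exists_eq_of_mem_sub_Ddiag {c : ℝ × ℝ} (hc : c ∈ Ddiag p ε - Ddiag p ε) :
    ∃ a e s : ℝ, |a| ≤ |(p : ℝ)| - 1 ∧ |e| ≤ |(p : ℝ)| - 1 ∧ |s| ≤ 1 ∧
      c = (a + s * ε, e + s * ε) := by
  obtain ⟨_, ⟨i, j, hi₀, hi, hj₀, hj, rfl⟩, _, ⟨k, l, hk₀, hk, hl₀, hl, rfl⟩, rfl⟩ :=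
    Set.mem_sub.mp hc
  have hcast : ∀ m n : ℤ, 0 ≤ m → m ≤ |p| - 1 → 0 ≤ n → n ≤ |p| - 1 →
      |(m : ℝ) - n| ≤ |(p : ℝ)| - 1 := fun m n hm hm' hn hn' => by
    rw [← Int.cast_sub, ← Int.cast_abs, ← Int.cast_abs, ← Int.cast_one, ← Int.cast_sub,
      Int.cast_le]
    exact abs_sub_le_iff.mpr ⟨by omega, by omega⟩
  refine ⟨i - k, j - l, (if i = j then 1 else 0) - (if k = l then 1 else 0),
    hcast i k hi₀ hi hk₀ hk, hcast j l hj₀ hj hl₀ hl, by split_ifs <;> norm_num, ?_⟩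
  ext <;> simp only [Prod.fst_sub, Prod.snd_sub] <;> split_ifs <;> ring

lemma exists_eq_of_mem_sub_Tdiag (hp : 2 < |p|) {z : ℝ × ℝ}
    (hz : z ∈ Tdiag p ε - Tdiag p ε) :
    ∃ a e s : ℝ, |a| ≤ 1 ∧ |e| ≤ 1 ∧ |s| ≤ (|(p : ℝ)| - 1)⁻¹ ∧ z = (a + s * ε, e + s * ε) := by
  have hb := one_lt_abs_cast hp
  have hN : 0 < |(p : ℝ)| - 1 := sub_pos.mpr hb
  obtain ⟨c, hc, rfl⟩ :=
    exists_tsum_eq_of_mem_sub_selfSimilarSet hb (Ddiag_finite p ε).isBounded hz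
  choose a e s ha he hs hce using fun k => exists_eq_of_mem_sub_Ddiag (hc k)
  have hA := (summable_inv_pow_succ_smul (x := a) hb ha).hasSum
  have hE := (summable_inv_pow_succ_smul (x := e) hb he).hasSum
  have hS := (summable_inv_pow_succ_smul (x := s) hb hs).hasSum
  refine ⟨_, _, _, ?_, ?_, ?_, (((hA.add (hS.mul_right ε)).prodMk
    (hE.add (hS.mul_right ε))).congr_fun fun k => ?_).tsum_eq⟩
  · simpa [div_self hN.ne'] using norm_tsum_inv_pow_succ_smul_le (x := a) hb ha
  · simpa [div_self hN.ne'] using norm_tsum_inv_pow_succ_smul_le (x := e) hb he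
  · simpa [one_div] using norm_tsum_inv_pow_succ_smul_le (x := s) hb hs
  · rw [hce k]
    ext <;> simp <;> ring

lemma abs_le_of_hasCrossEdge (hp : 2 < |p|) (h : HasCrossEdge p ε) :
    |ε| ≤ (|(p : ℝ)| - 1) ^ 2 / (|(p : ℝ)| - 2) := by
  obtain ⟨i, ⟨hi₀, hi⟩, k, ⟨hk₀, hk⟩, l, ⟨hl₀, hl⟩, hkl, hmem⟩ := h
  obtain ⟨a, e, s, ha, he, hs, hz⟩ := exists_eq_of_mem_sub_Tdiag hp hmem
  rw [digit_self, digit_of_ne hkl, Prod.mk_sub_mk, Prod.mk.injEq] at hz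
  have hlt : ∀ n : ℤ, (n : ℝ) < 2 - |(p : ℝ)| → n < 2 - |p| := fun n hn => by
    rw [← Int.cast_abs] at hn; exact_mod_cast hn
  have hgt : ∀ n : ℤ, |(p : ℝ)| - 2 < n → |p| - 2 < n := fun n hn => by
    rw [← Int.cast_abs] at hn; exact_mod_cast hn
  by_contra! hε
  have hw := sub_one_lt_abs_mul_one_sub (by rw [← Int.cast_abs]; exact_mod_cast hp) hε hs
  -- With `w = ε (1 - s)`: `i - k = a - w` and `i - l = e - w`, where `|a|, |e| ≤ 1` and
  -- `|w| > N - 1`; this forces `i - k = i - l = ±(N - 1)`, contradicting `k ≠ l`.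
  have hik : ((i - k : ℤ) : ℝ) = a - ε * (1 - s) := by push_cast; linarith [hz.1]
  have hil : ((i - l : ℤ) : ℝ) = e - ε * (1 - s) := by push_cast; linarith [hz.2]
  rcases lt_abs.mp hw with hw | hw
  · have := hlt (i - k) (by linarith [(abs_le.mp ha).2])
    have := hlt (i - l) (by linarith [(abs_le.mp he).2])
    omega
  · have := hgt (i - k) (by linarith [(abs_le.mp ha).1])
    have := hgt (i - l) (by linarith [(abs_le.mp he).1])
    omega

lemma exists_hasSum_digits (hp : 2 < |p|) {x : ℝ} (hx : x ∈ Icc 0 1) :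
    ∃ a : ℕ → ℤ, (∀ n, a n ∈ Icc 0 (|p| - 1)) ∧
      HasSum (fun n => (|(p : ℝ)| ^ (n + 1))⁻¹ * a n) x := by
  have hnat := Int.natCast_natAbs p
  obtain ⟨a, -, hax⟩ := Real.ofDigits_SurjOn (b := p.natAbs) (by omega) hx
  refine ⟨fun n => (a n : ℕ), fun n => ⟨by positivity, by have := (a n).2; dsimp only; omega⟩,
    ?_⟩
  have := (Real.summable_ofDigitsTerm (digits := a)).hasSum
  rw [← Real.ofDigits, hax] at this
  exact this.congr_fun fun n => by simp [Real.ofDigitsTerm, mul_comm]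

lemma hasCrossEdge_of_abs_le (hp : 2 < |p|)
    (hε : |ε| ≤ (|(p : ℝ)| - 1) ^ 2 / (|(p : ℝ)| - 2)) : HasCrossEdge p ε := by
  have hb := one_lt_abs_cast hp
  have hN : (3 : ℝ) ≤ |(p : ℝ)| := by rw [← Int.cast_abs]; exact_mod_cast hp
  set N := |(p : ℝ)|
  have hc : |ε * (N - 2) / (N - 1)| ≤ ((|p| - 1 : ℤ) : ℝ) := by
    rw [Int.cast_sub, Int.cast_abs, Int.cast_one, abs_div, abs_mul,
      abs_of_pos (by linarith : 0 < N - 2), abs_of_pos (by linarith : 0 < N - 1),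
      div_le_iff₀ (by linarith)]
    calc |ε| * (N - 2) ≤ (N - 1) ^ 2 / (N - 2) * (N - 2) := by gcongr; linarith
      _ = (N - 1) * (N - 1) := by field_simp [show N - 2 ≠ 0 by linarith]
  obtain ⟨m, hm₀, hm₁, hx⟩ := exists_int_sub_mem_Icc (by omega) hc
  obtain ⟨a, ha, hsum⟩ := exists_hasSum_digits hp hx
  -- The digit differences `(aₙ + ε, aₙ + ε - (N - 1))` sum to `(ε - m, ε - m - 1)`, which is
  -- `digit i i - digit k (k + 1)` for any `i - k = -m`.
  refine ⟨max (-m) 0, ⟨le_max_right _ _, by omega⟩, max m 0, ⟨le_max_right _ _, by omega⟩,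
    max m 0 + 1, ⟨by omega, by omega⟩, by omega, ?_⟩
  rw [digit_self, digit_of_ne (by omega), Tdiag_eq_selfSimilarSet]
  have hN1 : (N - 1)⁻¹ * (N - 1) = 1 := inv_mul_cancel₀ (by linarith)
  have hgeo := hasSum_inv_pow_succ hb
  convert mem_sub_selfSimilarSet_of_hasSum hb (Ddiag_finite p ε).isBounded
    (c := fun n => digit ε (a n) (a n) - digit ε 0 (|p| - 1))
    (fun n => sub_mem_sub (digit_mem_Ddiag (ha n) (ha n))
      (digit_mem_Ddiag ⟨le_rfl, by omega⟩ ⟨by omega, le_rfl⟩))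
    (((hsum.add (hgeo.mul_right ε)).prodMk
      (hsum.add (hgeo.mul_right (ε - (N - 1))))).congr_fun fun n => ?_) using 1
  · have hik : ((max (-m) 0 : ℤ) : ℝ) - ((max m 0 : ℤ) : ℝ) = -m := by
      exact_mod_cast (by omega : max (-m) 0 - max m 0 = -m)
    have hcε : ε * (N - 2) / (N - 1) + (N - 1)⁻¹ * ε = ε := by
      field_simp [show N - 1 ≠ 0 by linarith]; ring
    ext <;> simp only [Prod.fst_sub, Prod.snd_sub, Int.cast_add, Int.cast_one]
    · linear_combination hik - hcε
    · linear_combination hik - hcε + hN1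
  · rw [digit_self, digit_of_ne (by omega)]
    ext <;> simp [N] <;> ring

lemma hasCrossEdge_iff (hp : 2 < |p|) :
    HasCrossEdge p ε ↔ |ε| ≤ (|(p : ℝ)| - 1) ^ 2 / (|(p : ℝ)| - 2) :=
  ⟨abs_le_of_hasCrossEdge hp, hasCrossEdge_of_abs_le hp⟩

lemma isConnected_Tdiag_iff_hasCrossEdge (hp : 2 < |p|) :
    IsConnected (Tdiag p ε) ↔ HasCrossEdge p ε := by
  have h0 : (0 : ℤ) ∈ Icc 0 (|p| - 1) := ⟨le_rfl, by omega⟩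
  rw [Tdiag_eq_selfSimilarSet, isConnected_selfSimilarSet_iff (one_lt_abs_cast hp)
    (Ddiag_finite p ε) ⟨_, digit_mem_Ddiag h0 h0⟩]
  exact ⟨hasCrossEdge_of_reflTransGen hp, reflTransGen_of_hasCrossEdge hp⟩

end Digits

/-- `T_ε` is connected if and only if `|ε| ≤ (|p| - 1)² / (|p| - 2)`. -/
theorem stmt17 (p : ℤ) (hp : 2 < |p|) (ε : ℝ) :
    IsConnected (Tdiag p ε) ↔ |ε| ≤ (|(p : ℝ)| - 1) ^ 2 / (|(p : ℝ)| - 2) :=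
  (isConnected_Tdiag_iff_hasCrossEdge hp).trans (hasCrossEdge_iff hp)
end
end

section
/- Suppose ε = ℓ + k/p where ℓ ∈ {0, 1, …, p−2} and k ∈ {1, 2, …, p−1}. Then, as maps from ℝ² to ℝ², f_{0,0} ∘ f_{0,p−1} = f_{ℓ,ℓ+1} ∘ f_{k,k−1} and f_{0,0} ∘ f_{p−1,0} = f_{ℓ+1,ℓ} ∘ f_{k−1,k}; in particular the iterated function system {f_{i,j}} has exact overlaps and does not satisfy the open set condition. -/
noncomputable section

/-- The map `f_{i,j}(x, y) = ((x + i + δ_{ij} ε)/p, (y + j + δ_{ij} ε)/p)`. -/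
def fdiag (p : ℤ) (ε : ℝ) (i j : ℤ) (z : ℝ × ℝ) : ℝ × ℝ :=
  ((z.1 + (i : ℝ) + (if i = j then ε else 0)) / (p : ℝ),
   (z.2 + (j : ℝ) + (if i = j then ε else 0)) / (p : ℝ))

/-- if `ε = ℓ + k/p` with `ℓ ∈ {0, …, p-2}` and `k ∈ {1, …, p-1}`, then
`f_{0,0} ∘ f_{0,p-1} = f_{ℓ,ℓ+1} ∘ f_{k,k-1}` and `f_{0,0} ∘ f_{p-1,0} = f_{ℓ+1,ℓ} ∘ f_{k-1,k}`
as maps `ℝ² → ℝ²`; in particular the IFS has exact overlaps. -/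
theorem stmt19 (p : ℤ) (hp : 2 < p) (l k : ℤ)
    (hl0 : 0 ≤ l) (hl1 : l ≤ p - 2) (hk0 : 1 ≤ k) (hk1 : k ≤ p - 1)
    (ε : ℝ) (hε : ε = (l : ℝ) + (k : ℝ) / (p : ℝ)) :
    fdiag p ε 0 0 ∘ fdiag p ε 0 (p - 1) = fdiag p ε l (l + 1) ∘ fdiag p ε k (k - 1) ∧
    fdiag p ε 0 0 ∘ fdiag p ε (p - 1) 0 = fdiag p ε (l + 1) l ∘ fdiag p ε (k - 1) k := by
  have hp0 : (p : ℝ) ≠ 0 := by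
    exact_mod_cast (by omega : p ≠ 0)
  have h1 : (0 : ℤ) ≠ p - 1 := by omega
  have h2 : p - 1 ≠ 0 := by omega
  have h3 : l ≠ l + 1 := by omega
  have h4 : l + 1 ≠ l := by omega
  have h5 : k ≠ k - 1 := by omega
  have h6 : k - 1 ≠ k := by omega
  constructor <;> funext z <;>
    simp only [Function.comp_apply, fdiag, if_pos rfl, if_neg h1, if_neg h2, if_neg h3,
      if_neg h4, if_neg h5, if_neg h6, hε] <;>
    refine Prod.ext ?_ ?_ <;> push_cast <;> field_simp <;> ring
end
end
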